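/- On a Kenmotsu manifold of dimension 2n+1, the *-Ricci tensor is given by S*(X,Y) = S(X,Y) + (2n-1) g(X,Y) + η(X)η(Y) for all vector fields X, Y. -/

import Mathlib

/-- An abstract algebraic model of a `(2n+1)`-dimensional Kenmotsu manifold:
`C` plays the role of the ring of smooth functions on the manifold and vector
fields are modelled as `ℝ`-derivations of `C`.  A global orthonormal frame `e`
is included in order to express traces (Ricci tensor, scalar curvature). -/
structure KenmotsuManifold (n : ℕ) (C : Type*) [CommRing C] [Algebra ℝ C] where
  /-- the Riemannian metric -/
  g : Derivation ℝ C C → Derivation ℝ C C → C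
  /-- the structure `(1,1)`-tensor field -/
  φ : Derivation ℝ C C → Derivation ℝ C C
  /-- the Reeb (characteristic) vector field -/
  ξ : Derivation ℝ C C
  /-- the contact `1`-form -/
  η : Derivation ℝ C C → C
  /-- the Levi-Civita connection -/
  nabla : Derivation ℝ C C → Derivation ℝ C C → Derivation ℝ C C
  /-- a global orthonormal frame, used to take traces -/
  e : Fin (2 * n + 1) → Derivation ℝ C C
  g_symm : ∀ X Y, g X Y = g Y X
  g_add_left : ∀ X Y Z, g (X + Y) Z = g X Z + g Y Z
  g_smul_left : ∀ (f : C) (X Y), g (f • X) Y = f * g X Y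
  g_nondeg : ∀ X, (∀ Y, g X Y = 0) → X = 0
  g_frame : ∀ i j, g (e i) (e j) = if i = j then 1 else 0
  frame_span : ∀ X : Derivation ℝ C C, X = ∑ i, g X (e i) • e i
  phi_phi : ∀ X, φ (φ X) = -X + η X • ξ
  phi_linear : ∀ (f : C) (X Y), φ (f • X + Y) = f • φ X + φ Y
  eta_xi : η ξ = 1
  eta_def : ∀ X, η X = g X ξ
  compat_phi : ∀ X Y, g (φ X) (φ Y) = g X Y - η X * η Y
  nabla_add_left : ∀ X Y Z, nabla (X + Y) Z = nabla X Z + nabla Y Z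
  nabla_smul_left : ∀ (f : C) (X Y), nabla (f • X) Y = f • nabla X Y
  nabla_add_right : ∀ X Y Z, nabla X (Y + Z) = nabla X Y + nabla X Z
  nabla_leibniz : ∀ (X) (f : C) (Y), nabla X (f • Y) = X f • Y + f • nabla X Y
  torsion_free : ∀ X Y, nabla X Y - nabla Y X = ⁅X, Y⁆
  metric_compat : ∀ X Y Z, X (g Y Z) = g (nabla X Y) Z + g Y (nabla X Z)
  /-- the Kenmotsu condition `(∇_X φ)Y = g(φX,Y)ξ - η(Y)φX` -/
  kenmotsu : ∀ X Y, nabla X (φ Y) - φ (nabla X Y) = g (φ X) Y • ξ - η Y • φ X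

namespace KenmotsuManifold

variable {n : ℕ} {C : Type*} [CommRing C] [Algebra ℝ C] (K : KenmotsuManifold n C)

/-- the Riemann curvature tensor `R(X,Y)Z = ∇_X∇_Y Z - ∇_Y∇_X Z - ∇_{[X,Y]}Z` -/
def Rm (X Y Z : Derivation ℝ C C) : Derivation ℝ C C :=
  K.nabla X (K.nabla Y Z) - K.nabla Y (K.nabla X Z) - K.nabla ⁅X, Y⁆ Z

/-- the Ricci tensor `S(X,Y) = trace (Z ↦ R(Z,X)Y)` -/
def S (X Y : Derivation ℝ C C) : C := ∑ i, K.g (K.Rm (K.e i) X Y) (K.e i)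

/-- the Ricci operator `Q`, `g(QX,Y) = S(X,Y)` -/
def Q (X : Derivation ℝ C C) : Derivation ℝ C C := ∑ i, K.S X (K.e i) • K.e i

/-- the scalar curvature `r` -/
def r : C := ∑ i, K.S (K.e i) (K.e i)

/-- the `*`-Ricci tensor `S*(X,Y) = (1/2) trace (Z ↦ R(X,φY)φZ)` -/
noncomputable def Sstar (X Y : Derivation ℝ C C) : C :=
  (2 : ℝ)⁻¹ • ∑ i, K.g (K.Rm X (K.φ Y) (K.φ (K.e i))) (K.e i)

/-- the covariant derivative `(∇_X Q)Y` of the Ricci operator -/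
def nablaQ (X Y : Derivation ℝ C C) : Derivation ℝ C C :=
  K.nabla X (K.Q Y) - K.Q (K.nabla X Y)

/-- the Lie derivative `(£_V g)(X,Y)` of the metric -/
def lieG (V X Y : Derivation ℝ C C) : C :=
  V (K.g X Y) - K.g ⁅V, X⁆ Y - K.g X ⁅V, Y⁆

/-- the Lie derivative `(£_V S)(X,Y)` of the Ricci tensor -/
def lieS (V X Y : Derivation ℝ C C) : C :=
  V (K.S X Y) - K.S ⁅V, X⁆ Y - K.S X ⁅V, Y⁆

/-- `g` is a `*`-Ricci soliton with potential vector field `V` and soliton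
constant `l`: `£_V g + 2S* + 2l g = 0`. -/
def IsStarRicciSoliton (V : Derivation ℝ C C) (l : ℝ) : Prop :=
  ∀ X Y, K.lieG V X Y + 2 * K.Sstar X Y + (2 * l) • K.g X Y = 0

/-- `g` is a gradient almost `*`-Ricci soliton with potential function `f`
(with gradient `F`, i.e. `g(F,X) = Xf`) and soliton function `l`:
`Hess f + S* + l g = 0`. -/
def IsGradAlmostStarRicciSoliton (f : C) (F : Derivation ℝ C C) (l : C) : Prop :=
  (∀ X, K.g F X = X f) ∧ ∀ X Y, K.g (K.nabla X F) Y + K.Sstar X Y + l * K.g X Y = 0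

/-- `M` is `η`-Einstein: `S = α g + β η⊗η`. -/
def IsEtaEinstein : Prop :=
  ∃ α β : C, ∀ X Y, K.S X Y = α * K.g X Y + β * (K.η X * K.η Y)

end KenmotsuManifold

/-!
The Kenmotsu condition gives `∇_X ξ = X - η(X)ξ`, and differentiating once more
`R(X,Y)φZ = φR(X,Y)Z + g(φY,Z)X - g(φX,Z)Y + g(Y,Z)φX - g(X,Z)φY`.
Reading the frame as a basis, `2S*(X,Y) = tr(R(X,φY) ∘ φ) = tr(φ ∘ R(X,φY))`, and the first Bianchi
identity writes `R(X,φY)` as `R(·,φY)X - R(·,X)φY`. Pair symmetry and `g(φA,B) = -g(A,φB)` turn the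
first trace into minus the second, and the identity for `R(X,Y)φZ` evaluates `tr(φ ∘ R(·,X)φY)` to
`-(S + (2n-1)g + η⊗η)(X,Y)`.
-/

theorem eq_zero_of_add_self_eq_zero {M : Type*} [AddCommGroup M] [Module ℝ M] {a : M}
    (h : a + a = 0) : a = 0 := by
  rw [← two_smul ℝ] at h
  exact (smul_eq_zero.mp h).resolve_left two_ne_zero

theorem Derivation.commutator_smul_left {R A : Type*} [CommRing R] [CommRing A] [Algebra R A]
    (a : A) (D₁ D₂ : Derivation R A A) : ⁅a • D₁, D₂⁆ = a • ⁅D₁, D₂⁆ - D₂ a • D₁ := by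
  ext b
  simp only [Derivation.commutator_apply, Derivation.sub_apply, Derivation.smul_apply,
    smul_eq_mul, Derivation.leibniz]
  ring

namespace KenmotsuManifold

variable {n : ℕ} {C : Type*} [CommRing C] [Algebra ℝ C] (K : KenmotsuManifold n C)

section Linearity

variable (X Y Z : Derivation ℝ C C) (f : C)

theorem g_add_right : K.g X (Y + Z) = K.g X Y + K.g X Z := by
  rw [K.g_symm, K.g_add_left, K.g_symm Y, K.g_symm Z]

theorem g_smul_right : K.g X (f • Y) = f * K.g X Y := by
  rw [K.g_symm, K.g_smul_left, K.g_symm]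

def gₗ : Derivation ℝ C C →ₗ[C] C where
  toFun X := K.g X Y
  map_add' X Z := K.g_add_left X Z Y
  map_smul' f X := K.g_smul_left f X Y

@[simp] theorem gₗ_apply : K.gₗ Y X = K.g X Y := rfl

theorem g_zero_left : K.g 0 Y = 0 := map_zero (K.gₗ Y)

theorem g_neg_left : K.g (-X) Y = -K.g X Y := map_neg (K.gₗ Y) X

theorem g_sub_left : K.g (X - Y) Z = K.g X Z - K.g Y Z := map_sub (K.gₗ Z) X Y

theorem g_neg_right : K.g X (-Y) = -K.g X Y := by
  rw [K.g_symm, g_neg_left, K.g_symm]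

theorem g_sub_right : K.g X (Y - Z) = K.g X Y - K.g X Z := by
  rw [K.g_symm, g_sub_left, K.g_symm Y, K.g_symm Z]

theorem g_sum_left {ι : Type*} (s : Finset ι) (F : ι → Derivation ℝ C C) :
    K.g (∑ i ∈ s, F i) X = ∑ i ∈ s, K.g (F i) X :=
  map_sum (K.gₗ X) F s

theorem sum_g_frame_mul (A : Derivation ℝ C C) (F : Derivation ℝ C C →ₗ[C] C) :
    ∑ i, K.g A (K.e i) * F (K.e i) = F A := by
  conv_rhs => rw [K.frame_span A, map_sum]
  simp [smul_eq_mul]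

theorem phi_add : K.φ (X + Y) = K.φ X + K.φ Y := by
  simpa using K.phi_linear 1 X Y

theorem phi_zero : K.φ 0 = 0 := by
  simpa using (K.phi_linear 1 0 0).symm

theorem phi_smul : K.φ (f • X) = f • K.φ X := by
  simpa [phi_zero] using K.phi_linear f X 0

def φₗ : Module.End C (Derivation ℝ C C) where
  toFun := K.φ
  map_add' := K.phi_add
  map_smul' f X := K.phi_smul X f

@[simp] theorem φₗ_apply : K.φₗ X = K.φ X := rfl

theorem phi_sub : K.φ (X - Y) = K.φ X - K.φ Y := map_sub K.φₗ X Y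

def ηₗ : Derivation ℝ C C →ₗ[C] C where
  toFun := K.η
  map_add' X Y := by simp only [K.eta_def, K.g_add_left]
  map_smul' f X := by simp only [K.eta_def, K.g_smul_left, smul_eq_mul, RingHom.id_apply]

@[simp] theorem ηₗ_apply : K.ηₗ X = K.η X := rfl

theorem eta_add : K.η (X + Y) = K.η X + K.η Y := map_add K.ηₗ X Y

theorem eta_smul : K.η (f • X) = f * K.η X := map_smul K.ηₗ f X

theorem eta_sub : K.η (X - Y) = K.η X - K.η Y := map_sub K.ηₗ X Y

theorem g_xi_right : K.g X K.ξ = K.η X := (K.eta_def X).symm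

theorem g_xi_left : K.g K.ξ X = K.η X := by rw [K.g_symm, g_xi_right]

theorem g_xi_xi : K.g K.ξ K.ξ = 1 := by rw [g_xi_right, K.eta_xi]

theorem nabla_zero_right : K.nabla X 0 = 0 := by
  simpa using K.nabla_leibniz X 0 0

theorem nabla_neg_right : K.nabla X (-Y) = -K.nabla X Y := by
  simpa using K.nabla_leibniz X (-1) Y

theorem nabla_sub_right : K.nabla X (Y - Z) = K.nabla X Y - K.nabla X Z := by
  rw [sub_eq_add_neg, K.nabla_add_right, nabla_neg_right, sub_eq_add_neg]

theorem nabla_neg_left : K.nabla (-X) Y = -K.nabla X Y := by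
  simpa using K.nabla_smul_left (-1) X Y

theorem nabla_sub_left : K.nabla (X - Y) Z = K.nabla X Z - K.nabla Y Z := by
  rw [sub_eq_add_neg, K.nabla_add_left, nabla_neg_left, sub_eq_add_neg]

end Linearity

section AlmostContact

variable (X Y : Derivation ℝ C C)

/-- The axioms do not force `φξ = 0`, only `φξ = κ ξ` with `κ * κ = 0` and, through the curvature,
`κ * g(φX, Y) = 0`; so `κ` is carried along until it drops out. -/
def κ : C := K.η (K.φ K.ξ)

theorem eta_phi_xi : K.η (K.φ K.ξ) = K.κ := rfl

theorem phi_phi_xi : K.φ (K.φ K.ξ) = 0 := by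
  rw [K.phi_phi, K.eta_xi, one_smul, neg_add_cancel]

theorem phi_xi : K.φ K.ξ = K.κ • K.ξ := by
  have h := K.phi_phi (K.φ K.ξ)
  rw [K.phi_phi_xi, K.phi_zero] at h
  exact neg_add_eq_zero.mp h.symm

theorem g_phi_add_g_phi_eq_eta : K.g (K.φ X) Y + K.g X (K.φ Y)
    = K.η Y * K.η (K.φ X) + K.η X * K.η (K.φ Y) := by
  have h := K.compat_phi X (K.φ Y)
  rw [K.phi_phi Y, K.g_add_right, K.g_neg_right, K.g_smul_right, K.g_xi_right] at h
  linear_combination -h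

theorem eta_phi_phi : K.η (K.φ (K.φ X)) = 0 := by
  rw [K.phi_phi, K.eta_add, K.eta_smul, K.eta_xi, ← K.g_xi_right, K.g_neg_left,
    K.g_xi_right]
  ring

theorem eta_phi_mul_self : K.η (K.φ X) * K.η (K.φ X) = 0 := by
  have h := K.g_phi_add_g_phi_eq_eta X (K.φ X)
  rw [K.eta_phi_phi, K.phi_phi X, K.g_add_right, K.g_neg_right, K.g_smul_right,
    K.g_xi_right] at h
  linear_combination K.compat_phi X X - h

theorem eta_phi_mul_eta_phi : K.η (K.φ X) * K.η (K.φ Y) = 0 := by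
  have h := K.eta_phi_mul_self (X + Y)
  rw [K.phi_add, K.eta_add] at h
  apply eq_zero_of_add_self_eq_zero
  linear_combination h - K.eta_phi_mul_self X - K.eta_phi_mul_self Y

/-- `η ∘ φ = g(etaPhiDual, ·)`; since `φ` kills `etaPhiDual`, it is `κ ξ`, so `η ∘ φ = κ η`. -/
def etaPhiDual : Derivation ℝ C C := ∑ i, K.η (K.φ (K.e i)) • K.e i

theorem g_etaPhiDual : K.g K.etaPhiDual X = K.η (K.φ X) := by
  have h := K.sum_g_frame_mul X (K.ηₗ ∘ₗ K.φₗ)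
  simp only [LinearMap.comp_apply, φₗ_apply, ηₗ_apply] at h
  rw [etaPhiDual, K.g_sum_left, ← h]
  refine Finset.sum_congr rfl fun i _ => ?_
  rw [K.g_smul_left, K.g_symm, mul_comm]

theorem eta_etaPhiDual : K.η K.etaPhiDual = K.κ := by
  rw [← K.g_xi_right, g_etaPhiDual, κ]

theorem phi_etaPhiDual : K.φ K.etaPhiDual = 0 := by
  refine K.g_nondeg _ fun W => ?_
  have h := K.g_phi_add_g_phi_eq_eta K.etaPhiDual W
  have h₁ : K.η (K.φ K.etaPhiDual) = 0 :=
    calc K.η (K.φ K.etaPhiDual) = (K.ηₗ ∘ₗ K.φₗ) K.etaPhiDual := rfl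
    _ = ∑ i, K.η (K.φ (K.e i)) * K.η (K.φ (K.e i)) := by simp [etaPhiDual]
    _ = 0 := Finset.sum_eq_zero fun i _ => K.eta_phi_mul_self (K.e i)
  rw [K.g_etaPhiDual, K.eta_phi_phi, h₁, K.eta_etaPhiDual] at h
  linear_combination h + K.eta_phi_mul_eta_phi K.ξ W - K.η (K.φ W) * K.eta_phi_xi

theorem etaPhiDual_eq : K.etaPhiDual = K.κ • K.ξ := by
  have h := K.phi_phi K.etaPhiDual
  rw [K.phi_etaPhiDual, K.phi_zero, K.eta_etaPhiDual] at h
  exact neg_add_eq_zero.mp h.symm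

theorem eta_phi : K.η (K.φ X) = K.κ * K.η X := by
  rw [← K.g_etaPhiDual, K.etaPhiDual_eq, K.g_smul_left, K.g_xi_left]

theorem κ_mul_self : K.κ * K.κ = 0 := K.eta_phi_mul_eta_phi K.ξ K.ξ

theorem g_phi_add_g_phi : K.g (K.φ X) Y + K.g X (K.φ Y) = 2 * K.κ * K.η X * K.η Y := by
  linear_combination K.g_phi_add_g_phi_eq_eta X Y + K.η Y * K.eta_phi X + K.η X * K.eta_phi Y

theorem g_phi_phi : K.g (K.φ (K.φ X)) Y = -K.g X Y + K.η X * K.η Y := by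
  rw [K.phi_phi, K.g_add_left, K.g_neg_left, K.g_smul_left, K.g_xi_left]

theorem g_phi_right : K.g X (K.φ Y) = 2 * K.κ * K.η X * K.η Y - K.g (K.φ X) Y := by
  linear_combination K.g_phi_add_g_phi X Y

end AlmostContact

section Connection

variable (X Y Z : Derivation ℝ C C)

theorem nabla_phi : K.nabla X (K.φ Y)
    = K.φ (K.nabla X Y) + K.g (K.φ X) Y • K.ξ - K.η Y • K.φ X := by
  linear_combination (norm := module) K.kenmotsu X Y

theorem eta_nabla_xi : K.η (K.nabla X K.ξ) = 0 := by
  have h := K.metric_compat X K.ξ K.ξ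
  rw [K.g_xi_xi, Derivation.map_one_eq_zero, K.g_symm K.ξ] at h
  rw [K.eta_def]
  exact eq_zero_of_add_self_eq_zero h.symm

theorem nabla_xi : K.nabla X K.ξ = X - K.η X • K.ξ - K.κ • K.φ X := by
  have hker : K.g (K.φ X) (K.φ K.ξ) = 0 := by
    rw [K.compat_phi, K.eta_xi, ← K.eta_def]; ring
  have hφ : K.φ (K.nabla X (K.φ K.ξ)) = K.κ • K.φ X := by
    have h := K.kenmotsu X (K.φ K.ξ)
    rw [K.phi_phi_xi, K.nabla_zero_right, hker, K.eta_phi_xi, zero_smul, zero_sub] at h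
    simpa using congrArg Neg.neg h
  have hξ : K.φ (K.nabla X K.ξ) = K.nabla X (K.φ K.ξ) - (K.κ * K.η X) • K.ξ + K.φ X := by
    have h := K.kenmotsu X K.ξ
    rw [K.eta_xi, one_smul, K.g_xi_right, K.eta_phi] at h
    linear_combination (norm := module) -h
  have h := congrArg K.φ hξ
  rw [K.phi_phi (K.nabla X K.ξ), K.eta_nabla_xi, zero_smul, add_zero, K.phi_add, K.phi_sub, hφ,
    K.phi_smul, K.phi_xi, smul_smul, K.phi_phi X, mul_right_comm, K.κ_mul_self, zero_mul,
    zero_smul, sub_zero] at h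
  linear_combination (norm := module) -h

theorem apply_eta : X (K.η Y)
    = K.η (K.nabla X Y) + K.g X Y - K.η X * K.η Y - K.κ * K.g (K.φ X) Y := by
  have h := K.metric_compat X Y K.ξ
  rw [K.nabla_xi X, K.g_sub_right, K.g_sub_right, K.g_smul_right, K.g_smul_right] at h
  simp only [K.g_xi_right] at h
  linear_combination h - K.g_symm X Y + K.κ * K.g_symm (K.φ X) Y

theorem apply_g_phi : X (K.g (K.φ Y) Z)
    = K.g (K.φ (K.nabla X Y)) Z + K.g (K.φ X) Y * K.η Z - K.η Y * K.g (K.φ X) Z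
      + K.g (K.φ Y) (K.nabla X Z) := by
  have h := K.metric_compat X (K.φ Y) Z
  rw [K.nabla_phi X Y, K.g_sub_left, K.g_add_left, K.g_smul_left, K.g_smul_left,
    K.g_xi_left] at h
  linear_combination h

theorem apply_κ : X K.κ = 0 := by
  have h := K.metric_compat X (K.φ K.ξ) K.ξ
  have h₁ : K.g (K.nabla X (K.φ K.ξ)) K.ξ = 0 := by
    rw [K.nabla_phi X K.ξ, K.g_sub_left, K.g_add_left, K.g_smul_left, K.g_smul_left,
      K.g_xi_xi, K.g_xi_right (K.φ X), K.g_xi_right (K.φ _), K.eta_phi, K.eta_nabla_xi,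
      K.eta_xi]
    ring
  have h₂ : K.g (K.φ K.ξ) (K.nabla X K.ξ) = 0 := by
    rw [K.phi_xi, K.g_smul_left, K.g_xi_left, K.eta_nabla_xi, mul_zero]
  rwa [K.g_xi_right, K.eta_phi_xi, h₁, h₂, add_zero] at h

end Connection

section Curvature

variable (X Y Z W : Derivation ℝ C C) (f : C)

theorem rm_swap : K.Rm X Y Z = -K.Rm Y X Z := by
  rw [Rm, Rm, ← lie_skew Y X, K.nabla_neg_left]
  abel

theorem rm_smul_left : K.Rm (f • X) Y Z = f • K.Rm X Y Z := by
  rw [Rm, Rm, K.nabla_smul_left f X (K.nabla Y Z), K.nabla_smul_left f X Z,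
    K.nabla_leibniz Y f (K.nabla X Z), Derivation.commutator_smul_left, K.nabla_sub_left,
    K.nabla_smul_left, K.nabla_smul_left]
  module

theorem rm_add_left : K.Rm (X + W) Y Z = K.Rm X Y Z + K.Rm W Y Z := by
  rw [Rm, Rm, Rm, K.nabla_add_left X W (K.nabla Y Z), K.nabla_add_left X W Z,
    K.nabla_add_right Y, add_lie, K.nabla_add_left]
  abel

theorem rm_smul_right : K.Rm X Y (f • Z) = f • K.Rm X Y Z := by
  rw [Rm, Rm, K.nabla_leibniz Y f Z,
    K.nabla_add_right X, K.nabla_leibniz X (Y f) Z, K.nabla_leibniz X f (K.nabla Y Z),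
    K.nabla_leibniz X f Z,
    K.nabla_add_right Y, K.nabla_leibniz Y (X f) Z, K.nabla_leibniz Y f (K.nabla X Z),
    K.nabla_leibniz ⁅X,Y⁆ f Z, Derivation.commutator_apply]
  module

theorem rm_add_right : K.Rm X Y (Z + W) = K.Rm X Y Z + K.Rm X Y W := by
  rw [Rm, Rm, Rm, K.nabla_add_right, K.nabla_add_right, K.nabla_add_right,
    K.nabla_add_right, K.nabla_add_right]
  abel

def curvatureEnd : Module.End C (Derivation ℝ C C) where
  toFun Z := K.Rm X Y Z
  map_add' Z W := K.rm_add_right X Y Z W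
  map_smul' f Z := K.rm_smul_right X Y Z f

@[simp] theorem curvatureEnd_apply : K.curvatureEnd X Y Z = K.Rm X Y Z := rfl

def ricciEnd : Module.End C (Derivation ℝ C C) where
  toFun X := K.Rm X Y Z
  map_add' X W := K.rm_add_left X Y Z W
  map_smul' f X := K.rm_smul_left X Y Z f

@[simp] theorem ricciEnd_apply : K.ricciEnd Y Z X = K.Rm X Y Z := rfl

theorem g_rm_antisymm_left : K.g (K.Rm X Y Z) W = -K.g (K.Rm Y X Z) W := by
  rw [K.rm_swap, K.g_neg_left]

theorem g_rm_antisymm_right : K.g (K.Rm X Y Z) W = -K.g (K.Rm X Y W) Z := by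
  have r1 : K.g (K.Rm X Y Z) W = K.g (K.nabla X (K.nabla Y Z)) W
      - K.g (K.nabla Y (K.nabla X Z)) W - K.g (K.nabla ⁅X,Y⁆ Z) W := by
    rw [Rm, K.g_sub_left, K.g_sub_left]
  have r2 : K.g (K.Rm X Y W) Z = K.g Z (K.nabla X (K.nabla Y W))
      - K.g Z (K.nabla Y (K.nabla X W)) - K.g Z (K.nabla ⁅X,Y⁆ W) := by
    rw [K.g_symm, Rm, K.g_sub_right, K.g_sub_right]
  have c1 := congrArg X (K.metric_compat Y Z W)
  rw [map_add] at c1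
  have d1 := congrArg Y (K.metric_compat X Z W)
  rw [map_add] at d1
  linear_combination r1 + r2 - c1 - K.metric_compat X (K.nabla Y Z) W
    - K.metric_compat X Z (K.nabla Y W) + d1 + K.metric_compat Y (K.nabla X Z) W
    + K.metric_compat Y Z (K.nabla X W) + K.metric_compat ⁅X,Y⁆ Z W
    - Derivation.commutator_apply (R := ℝ) (K.g Z W)

theorem rm_bianchi : K.Rm X Y Z + K.Rm Y Z X + K.Rm Z X Y = 0 := by
  have hX : K.nabla X ⁅Y,Z⁆ = K.nabla X (K.nabla Y Z) - K.nabla X (K.nabla Z Y) := by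
    rw [← K.torsion_free Y Z, K.nabla_sub_right]
  have hY : K.nabla Y ⁅Z,X⁆ = K.nabla Y (K.nabla Z X) - K.nabla Y (K.nabla X Z) := by
    rw [← K.torsion_free Z X, K.nabla_sub_right]
  have hZ : K.nabla Z ⁅X,Y⁆ = K.nabla Z (K.nabla X Y) - K.nabla Z (K.nabla Y X) := by
    rw [← K.torsion_free X Y, K.nabla_sub_right]
  rw [Rm, Rm, Rm]
  linear_combination (norm := module) -hX - hY - hZ + K.torsion_free X ⁅Y,Z⁆
    + K.torsion_free Y ⁅Z,X⁆ + K.torsion_free Z ⁅X,Y⁆ + lie_jacobi X Y Z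

theorem g_rm_bianchi :
    K.g (K.Rm X Y Z) W + K.g (K.Rm Y Z X) W + K.g (K.Rm Z X Y) W = 0 := by
  simpa [K.g_add_left, K.g_zero_left] using congrArg (K.g · W) (K.rm_bianchi X Y Z)

theorem g_rm_pair_symm : K.g (K.Rm X Y Z) W = K.g (K.Rm Z W X) Y := by
  apply sub_eq_zero.mp
  apply eq_zero_of_add_self_eq_zero
  linear_combination K.g_rm_bianchi X Y Z W + K.g_rm_bianchi Y Z W X - K.g_rm_bianchi Z W X Y
    - K.g_rm_bianchi W X Y Z - K.g_rm_antisymm_right Y Z X W - K.g_rm_antisymm_left Z X Y W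
    + K.g_rm_antisymm_right X Z Y W - K.g_rm_antisymm_right Z W Y X
    - K.g_rm_antisymm_left W Y Z X + K.g_rm_antisymm_right Y W Z X
    + K.g_rm_antisymm_right W X Z Y + K.g_rm_antisymm_right X Y W Z

end Curvature

section KenmotsuCurvature

variable (X Y Z W : Derivation ℝ C C)

theorem rm_xi' : K.Rm X Y K.ξ = K.η X • Y - K.η Y • X
    + (2*(K.κ * K.η Y)) • K.φ X - (2*(K.κ * K.η X)) • K.φ Y := by
  have a1 : K.nabla X (K.nabla Y K.ξ)
      = K.nabla X Y - (X (K.η Y) • K.ξ + K.η Y • K.nabla X K.ξ)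
        - (X K.κ • K.φ Y + K.κ • K.nabla X (K.φ Y)) := by
    rw [K.nabla_xi Y, K.nabla_sub_right, K.nabla_sub_right, K.nabla_leibniz, K.nabla_leibniz]
  rw [K.apply_κ, K.apply_eta, K.nabla_xi X, K.nabla_phi X Y, zero_smul] at a1
  have a2 : K.nabla Y (K.nabla X K.ξ)
      = K.nabla Y X - (Y (K.η X) • K.ξ + K.η X • K.nabla Y K.ξ)
        - (Y K.κ • K.φ X + K.κ • K.nabla Y (K.φ X)) := by
    rw [K.nabla_xi X, K.nabla_sub_right, K.nabla_sub_right, K.nabla_leibniz, K.nabla_leibniz]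
  rw [K.apply_κ, K.apply_eta, K.nabla_xi Y, K.nabla_phi Y X, zero_smul] at a2
  have a3 : K.nabla (K.nabla X Y - K.nabla Y X) K.ξ
      = (K.nabla X Y - K.nabla Y X) - (K.η (K.nabla X Y) - K.η (K.nabla Y X)) • K.ξ
        - K.κ • (K.φ (K.nabla X Y) - K.φ (K.nabla Y X)) := by
    rw [K.nabla_xi (K.nabla X Y - K.nabla Y X), K.eta_sub, K.phi_sub]
  have hsym : (K.g X Y) • K.ξ = (K.g Y X) • K.ξ := by rw [K.g_symm]
  rw [Rm, ← K.torsion_free X Y]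
  linear_combination (norm := module) a1 - a2 - a3 - hsym

theorem rm_phi' : K.Rm X Y (K.φ Z) = K.φ (K.Rm X Y Z)
    + K.g (K.φ Y) Z • X - K.g (K.φ X) Z • Y
    + (K.g Y Z - 2*(K.κ * K.g (K.φ Y) Z)) • K.φ X
    - (K.g X Z - 2*(K.κ * K.g (K.φ X) Z)) • K.φ Y := by
  have b1 : K.nabla X (K.nabla Y (K.φ Z))
      = K.nabla X (K.φ (K.nabla Y Z))
        + (X (K.g (K.φ Y) Z) • K.ξ + K.g (K.φ Y) Z • K.nabla X K.ξ)
        - (X (K.η Z) • K.φ Y + K.η Z • K.nabla X (K.φ Y)) := by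
    rw [K.nabla_phi Y Z, K.nabla_sub_right, K.nabla_add_right, K.nabla_leibniz,
      K.nabla_leibniz]
  rw [K.nabla_phi X (K.nabla Y Z), K.apply_g_phi X Y Z, K.apply_eta X Z, K.nabla_xi X,
    K.nabla_phi X Y] at b1
  have b2 : K.nabla Y (K.nabla X (K.φ Z))
      = K.nabla Y (K.φ (K.nabla X Z))
        + (Y (K.g (K.φ X) Z) • K.ξ + K.g (K.φ X) Z • K.nabla Y K.ξ)
        - (Y (K.η Z) • K.φ X + K.η Z • K.nabla Y (K.φ X)) := by
    rw [K.nabla_phi X Z, K.nabla_sub_right, K.nabla_add_right, K.nabla_leibniz,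
      K.nabla_leibniz]
  rw [K.nabla_phi Y (K.nabla X Z), K.apply_g_phi Y X Z, K.apply_eta Y Z, K.nabla_xi Y,
    K.nabla_phi Y X] at b2
  have b3 : K.nabla (K.nabla X Y - K.nabla Y X) (K.φ Z)
      = K.φ (K.nabla (K.nabla X Y - K.nabla Y X) Z)
        + (K.g (K.φ (K.nabla X Y)) Z - K.g (K.φ (K.nabla Y X)) Z) • K.ξ
        - K.η Z • (K.φ (K.nabla X Y) - K.φ (K.nabla Y X)) := by
    rw [K.nabla_phi (K.nabla X Y - K.nabla Y X) Z, K.phi_sub, K.g_sub_left]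
  have hphiR : K.φ (K.Rm X Y Z)
      = K.φ (K.nabla X (K.nabla Y Z)) - K.φ (K.nabla Y (K.nabla X Z))
        - K.φ (K.nabla (K.nabla X Y - K.nabla Y X) Z) := by
    rw [Rm, ← K.torsion_free X Y, K.phi_sub, K.phi_sub]
  rw [Rm, ← K.torsion_free X Y, hphiR]
  linear_combination (norm := module) b1 - b2 - b3


theorem eta_rm' : K.η (K.Rm X Y Z) = K.η Y * K.g X Z - K.η X * K.g Y Z
    - 2 * K.κ * K.η Y * K.g (K.φ X) Z + 2 * K.κ * K.η X * K.g (K.φ Y) Z := by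
  rw [K.eta_def, K.g_rm_antisymm_right, K.rm_xi']
  simp only [K.g_add_left, K.g_sub_left, K.g_smul_left]
  ring

theorem κ_mul_g : K.κ * K.g X Y = K.κ * (K.η X * K.η Y) := by
  have h := congrArg (K.g · K.ξ) (K.rm_phi' K.ξ X Y)
  simp only [K.g_add_left, K.g_sub_left, K.g_smul_left, K.g_xi_right] at h
  rw [K.eta_rm', K.eta_phi (K.Rm K.ξ X Y), K.eta_rm', K.g_phi_right K.ξ Y,
    K.g_phi_right X Y, K.compat_phi X Y, K.phi_xi] at h
  simp only [K.g_smul_left, K.g_xi_left, K.eta_smul, K.eta_xi, K.eta_phi] at h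
  apply sub_eq_zero.mp
  apply eq_zero_of_add_self_eq_zero
  linear_combination h + 2 * K.κ * K.η X * K.η Y * K.κ_mul_self

theorem κ_mul_g_phi : K.κ * K.g (K.φ X) Y = 0 := by
  linear_combination K.κ_mul_g (K.φ X) Y + K.κ * K.η Y * K.eta_phi X
    + K.η X * K.η Y * K.κ_mul_self

theorem rm_phi : K.Rm X Y (K.φ Z) = K.φ (K.Rm X Y Z) + K.g (K.φ Y) Z • X - K.g (K.φ X) Z • Y
    + K.g Y Z • K.φ X - K.g X Z • K.φ Y := by
  rw [K.rm_phi', K.κ_mul_g_phi, K.κ_mul_g_phi]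
  module

theorem eta_rm : K.η (K.Rm X Y Z) = K.η Y * K.g X Z - K.η X * K.g Y Z := by
  linear_combination K.eta_rm' X Y Z - 2 * K.η Y * K.κ_mul_g_phi X Z
    + 2 * K.η X * K.κ_mul_g_phi Y Z

end KenmotsuCurvature

section Trace

variable (X : Derivation ℝ C C)

theorem sum_eta_frame_mul (F : Derivation ℝ C C →ₗ[C] C) :
    ∑ i, K.η (K.e i) * F (K.e i) = F K.ξ := by
  simpa [K.g_xi_left] using K.sum_g_frame_mul K.ξ F

theorem sum_eta_frame_mul_self : ∑ i, K.η (K.e i) * K.η (K.e i) = 1 := by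
  simpa [K.eta_xi] using K.sum_eta_frame_mul K.ηₗ

theorem sum_g_frame_self : ∑ i, K.g (K.e i) (K.e i) = 2 * n + 1 := by
  simp [K.g_frame]

theorem linearIndependent_frame : LinearIndependent C K.e := by
  rw [Fintype.linearIndependent_iff]
  intro c hc j
  simpa [K.g_sum_left, K.g_smul_left, K.g_frame, K.g_zero_left] using congrArg (K.g · (K.e j)) hc

noncomputable def frameBasis : Module.Basis (Fin (2 * n + 1)) C (Derivation ℝ C C) :=
  .mk K.linearIndependent_frame fun X _ => by
    rw [K.frame_span X]
    exact Submodule.sum_mem _ fun i _ => Submodule.smul_mem _ _ (Submodule.subset_span ⟨i, rfl⟩)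

@[simp] theorem coe_frameBasis : ⇑K.frameBasis = K.e := Module.Basis.coe_mk _ _

@[simp] theorem frameBasis_repr (i : Fin (2 * n + 1)) :
    K.frameBasis.repr X i = K.g X (K.e i) := by
  conv_lhs => rw [K.frame_span X, ← K.coe_frameBasis, Module.Basis.repr_sum_self]
  rw [K.coe_frameBasis]

theorem trace_eq_sum (F : Module.End C (Derivation ℝ C C)) :
    LinearMap.trace C _ F = ∑ i, K.g (F (K.e i)) (K.e i) := by
  rw [LinearMap.trace_eq_matrix_trace C K.frameBasis, Matrix.trace]
  simp [LinearMap.toMatrix_apply]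

theorem g_phi_frame_self (i : Fin (2 * n + 1)) :
    K.g (K.φ (K.e i)) (K.e i) = K.κ * (K.η (K.e i) * K.η (K.e i)) := by
  apply sub_eq_zero.mp
  apply eq_zero_of_add_self_eq_zero
  linear_combination K.g_phi_add_g_phi (K.e i) (K.e i) - K.g_symm (K.e i) (K.φ (K.e i))

theorem sum_g_phi_frame : ∑ i, K.g (K.φ (K.e i)) (K.e i) = K.κ := by
  simp only [g_phi_frame_self, ← Finset.mul_sum, sum_eta_frame_mul_self, mul_one]

theorem sum_g_phi_phi_frame : ∑ i, K.g (K.φ (K.φ (K.e i))) (K.e i) = -(2 * n) := by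
  simp only [g_phi_phi, Finset.sum_add_distrib,
    Finset.sum_neg_distrib, sum_g_frame_self, sum_eta_frame_mul_self]
  ring

theorem sum_g_apply_phi (G : Module.End C (Derivation ℝ C C)) :
    ∑ i, K.g (G (K.e i)) (K.φ (K.e i))
      = 2 * K.κ * K.η (G K.ξ) - LinearMap.trace C _ (K.φₗ * G) := by
  have h := K.sum_eta_frame_mul (K.ηₗ ∘ₗ G)
  simp only [LinearMap.comp_apply, ηₗ_apply] at h
  simp only [K.g_phi_right, K.trace_eq_sum, Module.End.mul_apply, φₗ_apply,
    Finset.sum_sub_distrib, ← h, Finset.mul_sum]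
  congr 1
  exact Finset.sum_congr rfl fun i _ => by ring

end Trace

section StarRicci

variable (X Y : Derivation ℝ C C)

theorem trace_phi_mul_ricciEnd_swap :
    LinearMap.trace C _ (K.φₗ * K.ricciEnd (K.φ Y) X)
      = -LinearMap.trace C _ (K.φₗ * K.ricciEnd X (K.φ Y)) := by
  have h := K.sum_g_apply_phi (K.ricciEnd (K.φ Y) X)
  have hκ : K.κ * K.η (K.Rm K.ξ (K.φ Y) X) = 0 := by
    rw [K.eta_rm, K.eta_phi, K.eta_xi, K.g_xi_left]
    linear_combination K.η Y * K.η X * K.κ_mul_self - K.κ_mul_g_phi Y X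
  have hsum : ∑ i, K.g (K.Rm (K.e i) (K.φ Y) X) (K.φ (K.e i))
      = LinearMap.trace C _ (K.ricciEnd X (K.φ Y) * K.φₗ) := by
    rw [K.trace_eq_sum]
    refine Finset.sum_congr rfl fun i _ => ?_
    rw [K.g_rm_antisymm_left, K.g_rm_pair_symm, K.g_rm_antisymm_left]
    simp
  rw [LinearMap.trace_mul_comm] at hsum
  simp only [ricciEnd_apply] at h
  linear_combination h - hsum + 2 * hκ

theorem trace_phi_mul_ricciEnd :
    LinearMap.trace C _ (K.φₗ * K.ricciEnd X (K.φ Y))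
      = -(K.S X Y + (2 * n - 1) * K.g X Y + K.η X * K.η Y) := by
  have hterm : ∀ i, K.g (K.φ (K.Rm (K.e i) X (K.φ Y))) (K.e i)
      = -K.g (K.Rm (K.e i) X Y) (K.e i) + K.η (K.e i) * K.η (K.Rm (K.e i) X Y)
        + K.g (K.φ X) Y * K.g (K.φ (K.e i)) (K.e i)
        - K.g (K.φ X) (K.e i) * K.g (K.φ (K.e i)) Y
        + K.g X Y * K.g (K.φ (K.φ (K.e i))) (K.e i)
        - K.g (K.φ (K.φ X)) (K.e i) * K.g (K.e i) Y := by
    intro i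
    rw [K.rm_phi]
    simp only [K.phi_add, K.phi_sub, K.phi_smul, K.g_add_left, K.g_sub_left, K.g_smul_left,
      K.g_phi_phi (K.Rm _ _ _)]
    ring
  have hS : ∑ i, K.g (K.Rm (K.e i) X Y) (K.e i) = K.S X Y := rfl
  have hη := K.sum_eta_frame_mul (K.ηₗ ∘ₗ K.ricciEnd X Y)
  have hφ := K.sum_g_frame_mul (K.φ X) (K.gₗ Y ∘ₗ K.φₗ)
  have hφφ := K.sum_g_frame_mul (K.φ (K.φ X)) (K.gₗ Y)
  simp only [LinearMap.comp_apply, ηₗ_apply, ricciEnd_apply, gₗ_apply, φₗ_apply] at hη hφ hφφ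
  simp only [K.trace_eq_sum, Module.End.mul_apply, φₗ_apply, ricciEnd_apply, hterm,
    Finset.sum_add_distrib, Finset.sum_sub_distrib, Finset.sum_neg_distrib, ← Finset.mul_sum,
    hS, hη, hφ, hφφ, sum_g_phi_frame, sum_g_phi_phi_frame]
  rw [K.eta_rm, K.g_phi_phi X Y, K.eta_xi, K.g_xi_left]
  linear_combination K.κ_mul_g_phi X Y

theorem two_smul_sstar :
    (2 : ℝ) • K.Sstar X Y = LinearMap.trace C _ (K.curvatureEnd X (K.φ Y) * K.φₗ) := by
  rw [Sstar, smul_smul, mul_inv_cancel₀ two_ne_zero, one_smul, K.trace_eq_sum]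
  rfl

theorem curvatureEnd_eq_sub : K.curvatureEnd X Y = K.ricciEnd Y X - K.ricciEnd X Y := by
  refine LinearMap.ext fun Z => ?_
  have h := K.rm_bianchi X Y Z
  rw [K.rm_swap Y Z X] at h
  simp only [LinearMap.sub_apply, curvatureEnd_apply, ricciEnd_apply]
  linear_combination (norm := module) h

end StarRicci

end KenmotsuManifold

open KenmotsuManifold in
/-- On a Kenmotsu manifold of dimension `2n+1`, the `*`-Ricci
tensor is `S* = S + (2n-1) g + η ⊗ η`. -/
theorem stmt2 {n : ℕ} {C : Type*} [CommRing C] [Algebra ℝ C]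
    (K : KenmotsuManifold n C) (X Y : Derivation ℝ C C) :
    K.Sstar X Y = K.S X Y + (2 * (n : ℝ) - 1) • K.g X Y + K.η X * K.η Y := by
  have h := K.two_smul_sstar X Y
  rw [LinearMap.trace_mul_comm, curvatureEnd_eq_sub, mul_sub, map_sub,
    trace_phi_mul_ricciEnd_swap, trace_phi_mul_ricciEnd] at h
  apply smul_right_injective C (two_ne_zero : (2 : ℝ) ≠ 0)
  change (2 : ℝ) • _ = (2 : ℝ) • _
  rw [h]
  simp only [Algebra.smul_def, map_sub, map_mul, map_ofNat, map_natCast, map_one]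
  ring
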